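/- Let y ∈ ℝⁿ, X ∈ ℝ^{n×p}, k ∈ {0,1,…,p} and τ > 0 be fixed. For λ ∈ (0, τ), consider the constrained problem (C_λ): minimize ‖y − Xβ‖₂ + (τ − λ)‖β‖₁ + λ T_k(β) subject to λ Σ_{i=1}^k |β_(i)| ≤ ‖y − Xβ‖₂, and the unconstrained problem (U_λ): minimize ‖y − Xβ‖₂ + (τ − λ)‖β‖₁ + λ T_k(β) over β ∈ ℝ^p. Then for every ε > 0 there exists λ̄ = λ̄(ε) > 0 such that whenever λ ∈ (0, λ̄): (1) every optimal solution of (C_λ) is ε-optimal for (U_λ); and (2) for every optimal solution β* of (U_λ) there exists β̂ with ‖β* − β̂‖₂ ≤ ε such that β̂ is feasible for (C_λ) and ε-optimal for (C_λ). -/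
import Mathlib


open Finset

/-- Absolute values of the entries of `β`, sorted in increasing order. -/
noncomputable def sortAbs {p : ℕ} (β : Fin p → ℝ) : Fin p → ℝ :=
  fun i => |β (Tuple.sort (fun j => |β j|) i)|

/-- `∑_{i=1}^k |β_(i)|`: the sum of the `k` largest absolute values of entries of `β`. -/
noncomputable def topSum {p : ℕ} (k : ℕ) (β : Fin p → ℝ) : ℝ :=
  ∑ i ∈ Finset.univ.filter (fun i : Fin p => p - k ≤ (i : ℕ)), sortAbs β i

/-- The trimmed Lasso penalty `T_k(β)`: sum of the `p - k` smallest `|β_i|`. -/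
noncomputable def trimmedLasso {p : ℕ} (k : ℕ) (β : Fin p → ℝ) : ℝ :=
  ∑ i ∈ Finset.univ.filter (fun i : Fin p => (i : ℕ) < p - k), sortAbs β i

/-- `‖β‖₁`: the ℓ₁ norm. -/
noncomputable def l1 {p : ℕ} (β : Fin p → ℝ) : ℝ := ∑ i, |β i|

/-- The Euclidean norm of a vector. -/
noncomputable def norm2 {m : ℕ} (v : Fin m → ℝ) : ℝ := Real.sqrt (∑ i, v i ^ 2)

/-- The common objective of `(C_λ)` and `(U_λ)`:
`β ↦ ‖y - Xβ‖₂ + (τ-λ)‖β‖₁ + λT_k(β)`. -/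
noncomputable def obj {n p : ℕ} (y : Fin n → ℝ) (X : Matrix (Fin n) (Fin p) ℝ)
    (k : ℕ) (τ lam : ℝ) (β : Fin p → ℝ) : ℝ :=
  norm2 (y - X.mulVec β) + (τ - lam) * l1 β + lam * trimmedLasso k β

/-- The feasibility constraint of `(C_λ)`: `λ∑_{i=1}^k |β_(i)| ≤ ‖y - Xβ‖₂`. -/
def feas {n p : ℕ} (y : Fin n → ℝ) (X : Matrix (Fin n) (Fin p) ℝ)
    (k : ℕ) (lam : ℝ) (β : Fin p → ℝ) : Prop :=
  lam * topSum k β ≤ norm2 (y - X.mulVec β)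

lemma sortAbs_nonneg {p : ℕ} (β : Fin p → ℝ) (i : Fin p) : 0 ≤ sortAbs β i := abs_nonneg _

lemma sum_sortAbs {p : ℕ} (β : Fin p → ℝ) : ∑ i, sortAbs β i = l1 β :=
  Equiv.sum_comp (Tuple.sort (fun j => |β j|)) (fun j => |β j|)

lemma l1_nonneg {p : ℕ} (β : Fin p → ℝ) : 0 ≤ l1 β :=
  Finset.sum_nonneg fun i _ => abs_nonneg _

lemma topSum_nonneg {p : ℕ} (k : ℕ) (β : Fin p → ℝ) : 0 ≤ topSum k β :=
  Finset.sum_nonneg fun i _ => sortAbs_nonneg β i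

lemma trimmed_nonneg {p : ℕ} (k : ℕ) (β : Fin p → ℝ) : 0 ≤ trimmedLasso k β :=
  Finset.sum_nonneg fun i _ => sortAbs_nonneg β i

lemma topSum_le_l1 {p : ℕ} (k : ℕ) (β : Fin p → ℝ) : topSum k β ≤ l1 β := by
  rw [← sum_sortAbs β]
  exact Finset.sum_le_sum_of_subset_of_nonneg (Finset.filter_subset _ _)
    (fun i _ _ => sortAbs_nonneg β i)

lemma trimmed_le_l1 {p : ℕ} (k : ℕ) (β : Fin p → ℝ) : trimmedLasso k β ≤ l1 β := by
  rw [← sum_sortAbs β]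
  exact Finset.sum_le_sum_of_subset_of_nonneg (Finset.filter_subset _ _)
    (fun i _ _ => sortAbs_nonneg β i)

lemma topSum_zero {p : ℕ} (k : ℕ) : topSum k (0 : Fin p → ℝ) = 0 := by
  simp [topSum, sortAbs]

lemma l1_zero {p : ℕ} : l1 (0 : Fin p → ℝ) = 0 := by simp [l1]

lemma trimmed_zero {p : ℕ} (k : ℕ) : trimmedLasso k (0 : Fin p → ℝ) = 0 := by
  simp [trimmedLasso, sortAbs]

lemma l1_smul {p : ℕ} (c : ℝ) (β : Fin p → ℝ) : l1 (c • β) = |c| * l1 β := by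
  simp [l1, abs_mul, Finset.mul_sum]

lemma norm2_nonneg {m : ℕ} (v : Fin m → ℝ) : 0 ≤ norm2 v := Real.sqrt_nonneg _

lemma norm2_eq_norm {m : ℕ} (v : Fin m → ℝ) :
    norm2 v = ‖(WithLp.equiv 2 (Fin m → ℝ)).symm v‖ := by
  rw [EuclideanSpace.norm_eq]
  simp [norm2, sq_abs]

lemma norm2_add_le {m : ℕ} (a b : Fin m → ℝ) : norm2 (a + b) ≤ norm2 a + norm2 b := by
  rw [norm2_eq_norm, norm2_eq_norm, norm2_eq_norm]
  exact norm_add_le _ _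

lemma norm2_neg {m : ℕ} (a : Fin m → ℝ) : norm2 (-a) = norm2 a := by
  simp [norm2]

lemma norm2_sub_le' {m : ℕ} (a b : Fin m → ℝ) : norm2 b - norm2 a ≤ norm2 (a + b) := by
  have h := norm2_add_le (a + b) (-a)
  have he : (a + b) + (-a) = b := by abel
  rw [he, norm2_neg] at h
  linarith

lemma norm2_smul {m : ℕ} (c : ℝ) (v : Fin m → ℝ) : norm2 (c • v) = |c| * norm2 v := by
  have : ∑ i, (c • v) i ^ 2 = c ^ 2 * ∑ i, v i ^ 2 := by
    simp [Finset.mul_sum, mul_pow]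
  rw [norm2, this, Real.sqrt_mul (sq_nonneg c), Real.sqrt_sq_eq_abs, norm2]

lemma norm2_le_l1 {m : ℕ} (v : Fin m → ℝ) : norm2 v ≤ l1 v := by
  have h1 : ∑ i, v i ^ 2 ≤ (∑ i, |v i|) ^ 2 := by
    rw [sq, Finset.sum_mul]
    apply Finset.sum_le_sum
    intro i _
    have h2 : v i ^ 2 = |v i| * |v i| := by rw [abs_mul_abs_self, sq]
    rw [h2]
    exact mul_le_mul_of_nonneg_left
      (Finset.single_le_sum (fun j _ => abs_nonneg (v j)) (Finset.mem_univ i)) (abs_nonneg _)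
  calc norm2 v ≤ Real.sqrt ((∑ i, |v i|) ^ 2) := Real.sqrt_le_sqrt h1
  _ = ∑ i, |v i| := Real.sqrt_sq (Finset.sum_nonneg fun j _ => abs_nonneg _)
  _ = l1 v := rfl

lemma abs_le_l1 {p : ℕ} (v : Fin p → ℝ) (j : Fin p) : |v j| ≤ l1 v :=
  Finset.single_le_sum (fun j _ => abs_nonneg (v j)) (Finset.mem_univ j)

lemma norm2_mulVec_le {n p : ℕ} (X : Matrix (Fin n) (Fin p) ℝ) (v : Fin p → ℝ) :
    norm2 (X.mulVec v) ≤ (∑ i, ∑ j, |X i j|) * l1 v := by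
  refine (norm2_le_l1 _).trans ?_
  rw [Finset.sum_mul]
  apply Finset.sum_le_sum
  intro i _
  calc |X.mulVec v i| = |∑ j, X i j * v j| := by simp [Matrix.mulVec, dotProduct]
  _ ≤ ∑ j, |X i j * v j| := Finset.abs_sum_le_sum_abs _ _
  _ = ∑ j, |X i j| * |v j| := by simp [abs_mul]
  _ ≤ ∑ j, |X i j| * l1 v :=
      Finset.sum_le_sum fun j _ => mul_le_mul_of_nonneg_left (abs_le_l1 v j) (abs_nonneg _)
  _ = (∑ j, |X i j|) * l1 v := (Finset.sum_mul _ _ _).symm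

lemma obj_nonneg {n p : ℕ} (y : Fin n → ℝ) (X : Matrix (Fin n) (Fin p) ℝ)
    (k : ℕ) {τ lam : ℝ} (h0 : 0 ≤ lam) (h1 : lam ≤ τ) (β : Fin p → ℝ) :
    0 ≤ obj y X k τ lam β := by
  have := norm2_nonneg (y - X.mulVec β)
  have := mul_nonneg (by linarith : (0:ℝ) ≤ τ - lam) (l1_nonneg β)
  have := mul_nonneg h0 (trimmed_nonneg k β)
  unfold obj; linarith

lemma obj_zero {n p : ℕ} (y : Fin n → ℝ) (X : Matrix (Fin n) (Fin p) ℝ)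
    (k : ℕ) (τ lam : ℝ) : obj y X k τ lam (0 : Fin p → ℝ) = norm2 y := by
  simp [obj, l1_zero, trimmed_zero, Matrix.mulVec_zero]

lemma feas_zero {n p : ℕ} (y : Fin n → ℝ) (X : Matrix (Fin n) (Fin p) ℝ)
    (k : ℕ) (lam : ℝ) : feas y X k lam (0 : Fin p → ℝ) := by
  unfold feas
  rw [topSum_zero, mul_zero]
  exact norm2_nonneg _

set_option maxHeartbeats 2000000 in
lemma core {n p : ℕ} (y : Fin n → ℝ) (X : Matrix (Fin n) (Fin p) ℝ) (k : ℕ)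
    {τ ε M Ny K lam : ℝ} (hNy : Ny = norm2 y) (hNypos : 0 < Ny)
    (hK : K = ∑ i, ∑ j, |X i j|) (hM : 0 < M) (hε : 0 < ε)
    (hlam : 0 < lam) (hlamτ : lam < τ)
    (h2 : lam * M < Ny / 4) (h3 : lam * M ≤ ε / 4)
    (h4 : 4 * lam * M ^ 2 * (K + 1) / Ny ≤ ε / 4)
    (β : Fin p → ℝ) (hβ : l1 β ≤ M) :
    ∃ βh, feas y X k lam βh ∧ obj y X k τ lam βh ≤ obj y X k τ lam β + ε / 2 ∧
      norm2 (β - βh) ≤ ε := by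
  have hK0 : 0 ≤ K := hK ▸ Finset.sum_nonneg fun i _ => Finset.sum_nonneg fun j _ => abs_nonneg _
  by_cases hf : feas y X k lam β
  · refine ⟨β, hf, by linarith, ?_⟩
    have : norm2 (β - β) = 0 := by rw [sub_self]; simp [norm2]
    linarith
  · unfold feas at hf
    push_neg at hf
    have hres : norm2 (y - X.mulVec β) < lam * M :=
      lt_of_lt_of_le hf (by
        have := (topSum_le_l1 k β).trans hβ
        nlinarith)
    have hNy0 : Ny ≠ 0 := ne_of_gt hNypos
    obtain ⟨t, ht_def⟩ : ∃ t : ℝ, t = 4 * lam * M / Ny := ⟨_, rfl⟩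
    have ht0 : 0 < t := by rw [ht_def]; positivity
    have htNy : t * Ny = 4 * lam * M := by rw [ht_def]; field_simp
    have ht1 : t < 1 := by
      rw [ht_def, div_lt_one hNypos]; nlinarith
    obtain ⟨βh, hβh_def⟩ : ∃ βh : Fin p → ℝ, βh = (1 - t) • β := ⟨_, rfl⟩
    have hsub : β - βh = t • β := by
      rw [hβh_def]; module
    have hβhs : βh = β - t • β := by rw [hβh_def]; module
    have hXd : y - X.mulVec βh = (y - X.mulVec β) + t • X.mulVec β := by
      rw [hβhs, Matrix.mulVec_sub, Matrix.mulVec_smul]; abel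
    have hl1βh : l1 βh = (1 - t) * l1 β := by
      rw [hβh_def, l1_smul, abs_of_nonneg (by linarith)]
    have hl1βhM : l1 βh ≤ M := by
      rw [hl1βh]; nlinarith [l1_nonneg β]
    -- lower bound on residual at βh
    have hXβ_lb : Ny - lam * M ≤ norm2 (X.mulVec β) := by
      have h := norm2_add_le (y - X.mulVec β) (X.mulVec β)
      have he : (y - X.mulVec β) + X.mulVec β = y := by abel
      rw [he] at h
      rw [hNy]; linarith
    have hsm : norm2 (t • X.mulVec β) = t * norm2 (X.mulVec β) := by
      rw [norm2_smul, abs_of_nonneg ht0.le]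
    have hlb : lam * M ≤ norm2 (y - X.mulVec βh) := by
      have h := norm2_sub_le' (y - X.mulVec β) (t • X.mulVec β)
      rw [← hXd, hsm] at h
      have h5 : t * (Ny - lam * M) ≤ t * norm2 (X.mulVec β) :=
        mul_le_mul_of_nonneg_left hXβ_lb ht0.le
      nlinarith
    have hfeas : feas y X k lam βh := by
      unfold feas
      have := (topSum_le_l1 k βh).trans hl1βhM
      nlinarith
    -- objective increase
    have hKM : norm2 (X.mulVec β) ≤ K * M := by
      have := norm2_mulVec_le X β
      rw [← hK] at this
      nlinarith [norm2_nonneg (X.mulVec β)]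
    have htMK : t * M * (K + 1) ≤ ε / 4 := by
      have hEq : t * M * (K + 1) = 4 * lam * M ^ 2 * (K + 1) / Ny := by
        rw [ht_def]; ring
      linarith [hEq ▸ h4]
    have htM0 : 0 ≤ t * M := by positivity
    have hub : norm2 (y - X.mulVec βh) ≤ norm2 (y - X.mulVec β) + t * (K * M) := by
      have h := norm2_add_le (y - X.mulVec β) (t • X.mulVec β)
      rw [← hXd, hsm] at h
      nlinarith [mul_le_mul_of_nonneg_left hKM ht0.le]
    have hobj : obj y X k τ lam βh ≤ obj y X k τ lam β + ε / 2 := by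
      have f3 : (τ - lam) * l1 βh ≤ (τ - lam) * l1 β := by
        apply mul_le_mul_of_nonneg_left _ (by linarith)
        rw [hl1βh]; nlinarith [l1_nonneg β]
      have f4 : lam * trimmedLasso k βh ≤ lam * M :=
        mul_le_mul_of_nonneg_left ((trimmed_le_l1 k βh).trans hl1βhM) hlam.le
      have f5 : 0 ≤ lam * trimmedLasso k β := mul_nonneg hlam.le (trimmed_nonneg k β)
      have f6 : t * (K * M) ≤ ε / 4 := by nlinarith
      unfold obj
      linarith
    have hdist : norm2 (β - βh) ≤ ε := by
      rw [hsub]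
      have h := norm2_le_l1 (t • β)
      rw [l1_smul, abs_of_nonneg ht0.le] at h
      nlinarith [mul_le_mul_of_nonneg_left hβ ht0.le]
    exact ⟨βh, hfeas, hobj, hdist⟩

set_option maxHeartbeats 2000000 in
/-- Theorem B.1: for every `ε > 0` there is `λ̄(ε) > 0` such that
for all `λ ∈ (0, λ̄)` (with `λ < τ`): (1) every optimal solution of the
constrained problem `(C_λ)` is `ε`-optimal for the unconstrained problem
`(U_λ)`; and (2) every optimal solution `β*` of `(U_λ)` is within `ε` of some
`β̂` that is feasible and `ε`-optimal for `(C_λ)`. -/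
theorem constrained_vs_unconstrained_trimmedLasso {n p : ℕ} (y : Fin n → ℝ)
    (X : Matrix (Fin n) (Fin p) ℝ) (k : ℕ) (hk : k ≤ p) (τ : ℝ) (hτ : 0 < τ) :
    ∀ ε : ℝ, 0 < ε → ∃ lamBar : ℝ, 0 < lamBar ∧
      ∀ lam : ℝ, 0 < lam → lam < lamBar → lam < τ →
      (∀ βs : Fin p → ℝ,
        (feas y X k lam βs ∧ ∀ β, feas y X k lam β → obj y X k τ lam βs ≤ obj y X k τ lam β) →
        obj y X k τ lam βs ≤
          sInf {v : ℝ | ∃ β : Fin p → ℝ, v = obj y X k τ lam β} + ε) ∧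
      (∀ βs : Fin p → ℝ, (∀ β, obj y X k τ lam βs ≤ obj y X k τ lam β) →
        ∃ βh : Fin p → ℝ, norm2 (βs - βh) ≤ ε ∧ feas y X k lam βh ∧
          obj y X k τ lam βh ≤
            sInf {v : ℝ | ∃ β : Fin p → ℝ, feas y X k lam β ∧
              v = obj y X k τ lam β} + ε) := by
  intro ε hε
  by_cases hy : norm2 y = 0
  · refine ⟨1, one_pos, fun lam hlam _ hlamτ => ⟨?_, ?_⟩⟩
    · rintro βs ⟨hfs, hopt⟩
      have h0 : obj y X k τ lam βs ≤ 0 := by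
        have := hopt 0 (feas_zero y X k lam)
        rwa [obj_zero, hy] at this
      have hs : 0 ≤ sInf {v : ℝ | ∃ β : Fin p → ℝ, v = obj y X k τ lam β} := by
        apply le_csInf
        · exact ⟨obj y X k τ lam 0, 0, rfl⟩
        · rintro v ⟨β, rfl⟩
          exact obj_nonneg y X k hlam.le hlamτ.le β
      linarith
    · intro βs hopt
      have h0 : obj y X k τ lam βs ≤ 0 := by
        have := hopt 0
        rwa [obj_zero, hy] at this
      have hl1 : l1 βs = 0 := by
        have h1 := norm2_nonneg (y - X.mulVec βs)
        have h2 := mul_nonneg hlam.le (trimmed_nonneg k βs)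
        have h3 := l1_nonneg βs
        unfold obj at h0
        nlinarith
      have hfeas : feas y X k lam βs := by
        unfold feas
        have h1 : topSum k βs ≤ 0 := hl1 ▸ topSum_le_l1 k βs
        have h2 := topSum_nonneg k βs
        have h3 : lam * topSum k βs = 0 := by nlinarith
        rw [h3]; exact norm2_nonneg _
      refine ⟨βs, ?_, hfeas, ?_⟩
      · rw [sub_self]
        have h4 : norm2 (0 : Fin p → ℝ) = 0 := by simp [norm2]
        linarith
      · have hs : obj y X k τ lam βs ≤ sInf {v : ℝ | ∃ β : Fin p → ℝ, feas y X k lam β ∧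
              v = obj y X k τ lam β} := by
          apply le_csInf
          · exact ⟨obj y X k τ lam 0, 0, feas_zero y X k lam, rfl⟩
          · rintro v ⟨β, _, rfl⟩
            exact hopt β
        linarith
  · have hNypos : 0 < norm2 y := lt_of_le_of_ne (norm2_nonneg y) (Ne.symm hy)
    set Ny := norm2 y with hNydef
    set K := ∑ i, ∑ j, |X i j| with hKdef
    have hK0 : 0 ≤ K :=
      Finset.sum_nonneg fun i _ => Finset.sum_nonneg fun j _ => abs_nonneg _
    set M := 2 * (Ny + ε) / τ with hMdef
    have hM : 0 < M := by positivity
    have hMτ : M * τ = 2 * (Ny + ε) := by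
      rw [hMdef]; field_simp
    refine ⟨min (min (τ/2) (Ny/(8*M))) (min (ε/(4*M)) (ε*Ny/(16*M^2*(K+1)))),
      by positivity, fun lam hlam hlamB hlamτ => ?_⟩
    have hb1 : lam < τ/2 :=
      lt_of_lt_of_le hlamB ((min_le_left _ _).trans (min_le_left _ _))
    have hb2 : lam < Ny/(8*M) :=
      lt_of_lt_of_le hlamB ((min_le_left _ _).trans (min_le_right _ _))
    have hb3 : lam < ε/(4*M) :=
      lt_of_lt_of_le hlamB ((min_le_right _ _).trans (min_le_left _ _))
    have hb4 : lam < ε*Ny/(16*M^2*(K+1)) :=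
      lt_of_lt_of_le hlamB ((min_le_right _ _).trans (min_le_right _ _))
    have h2 : lam * M < Ny/4 := by
      have := (lt_div_iff₀ (by positivity : (0:ℝ) < 8*M)).mp hb2
      nlinarith
    have h3 : lam * M ≤ ε/4 := by
      have := (lt_div_iff₀ (by positivity : (0:ℝ) < 4*M)).mp hb3
      nlinarith
    have h4 : 4 * lam * M^2 * (K+1) / Ny ≤ ε/4 := by
      rw [div_le_iff₀ hNypos]
      have := (lt_div_iff₀ (by positivity : (0:ℝ) < 16*M^2*(K+1))).mp hb4
      nlinarith
    constructor
    · rintro βs ⟨hfs, hopt⟩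
      have hSne : ({v : ℝ | ∃ β : Fin p → ℝ, v = obj y X k τ lam β}).Nonempty :=
        ⟨obj y X k τ lam 0, 0, rfl⟩
      obtain ⟨v, ⟨β, rfl⟩, hv⟩ := Real.lt_sInf_add_pos hSne (half_pos hε)
      have hb : BddBelow {v : ℝ | ∃ β : Fin p → ℝ, v = obj y X k τ lam β} :=
        ⟨0, by rintro v ⟨β, rfl⟩; exact obj_nonneg y X k hlam.le hlamτ.le β⟩
      have hsle : sInf {v : ℝ | ∃ β : Fin p → ℝ, v = obj y X k τ lam β} ≤ Ny := by
        have hmem : obj y X k τ lam (0 : Fin p → ℝ) ∈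
            {v : ℝ | ∃ β : Fin p → ℝ, v = obj y X k τ lam β} := ⟨0, rfl⟩
        have := csInf_le hb hmem
        rwa [obj_zero] at this
      have hl1β : l1 β ≤ M := by
        have hA := norm2_nonneg (y - X.mulVec β)
        have hB := mul_nonneg hlam.le (trimmed_nonneg k β)
        have hC : (τ/2) * l1 β ≤ (τ - lam) * l1 β :=
          mul_le_mul_of_nonneg_right (by linarith) (l1_nonneg β)
        have hD : obj y X k τ lam β =
            norm2 (y - X.mulVec β) + (τ - lam) * l1 β + lam * trimmedLasso k β := rfl
        nlinarith
      obtain ⟨βh, hfeas, hoβ, _⟩ :=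
        core y X k hNydef hNypos hKdef hM hε hlam hlamτ h2 h3 h4 β hl1β
      have := hopt βh hfeas
      linarith
    · intro βs hopt
      have hl1βs : l1 βs ≤ M := by
        have h0 := hopt 0
        rw [obj_zero] at h0
        have hA := norm2_nonneg (y - X.mulVec βs)
        have hB := mul_nonneg hlam.le (trimmed_nonneg k βs)
        have hC : (τ/2) * l1 βs ≤ (τ - lam) * l1 βs :=
          mul_le_mul_of_nonneg_right (by linarith) (l1_nonneg βs)
        have hD : obj y X k τ lam βs =
            norm2 (y - X.mulVec βs) + (τ - lam) * l1 βs + lam * trimmedLasso k βs := rfl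
        nlinarith
      obtain ⟨βh, hfeas, hoβ, hdist⟩ :=
        core y X k hNydef hNypos hKdef hM hε hlam hlamτ h2 h3 h4 βs hl1βs
      refine ⟨βh, hdist, hfeas, ?_⟩
      have hs : obj y X k τ lam βs ≤ sInf {v : ℝ | ∃ β : Fin p → ℝ, feas y X k lam β ∧
          v = obj y X k τ lam β} := by
        apply le_csInf
        · exact ⟨obj y X k τ lam 0, 0, feas_zero y X k lam, rfl⟩
        · rintro v ⟨β, _, rfl⟩
          exact hopt β
      linarith
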